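/- With notation as above, Φ_{α,d}(λ) = J_{λ,d}^α · Φ_{0,d}(λ) for every 0 ≤ α < N and λ not a node. -/

import Mathlib

/-!
Write `w_i` for the barycentric weights. Since `z_i = (z_i - λ) + λ`, the scalars satisfy
`φ_{α+1,j+1} = φ_{α,j} + λ φ_{α,j+1}`, and `φ_{α,0} = ∑ w_i z_i^α` is the coefficient of
`X^{N-1}` in the Lagrange interpolant of `X^α` on the `N` nodes, i.e. in `X^α` itself, so it
vanishes for `α + 1 < N`. On upper triangular Toeplitz matrices these two facts say exactly
`J_{λ,d} Φ_{α,d} = Φ_{α+1,d}`, and the theorem follows by induction on `α`.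
-/

open Finset Matrix

/-- `φ_{α,j}(λ)` built from nodes `z` and barycentric weights. -/
noncomputable def phiRI (N : ℕ) (z : Fin N → ℂ) (α j : ℕ) (lam : ℂ) : ℂ :=
  ∑ i : Fin N, (∏ k ∈ Finset.univ.erase i, (z i - z k))⁻¹ * z i ^ α * ((z i - lam) ^ j)⁻¹

/-- `d × d` Jordan block with eigenvalue `lam`. -/
def jordanBlock (d : ℕ) (lam : ℂ) : Matrix (Fin d) (Fin d) ℂ :=
  fun r s => if (r : ℕ) = s then lam else if (s : ℕ) = r + 1 then 1 else 0

/-- Upper triangular Toeplitz matrix `Φ_{α,d}(lam)`. -/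
noncomputable def PhiRI (N : ℕ) (z : Fin N → ℂ) (α d : ℕ) (lam : ℂ) :
    Matrix (Fin d) (Fin d) ℂ :=
  fun r s => if (r : ℕ) ≤ s then phiRI N z α ((s : ℕ) - r + 1) lam else 0

open Polynomial

theorem Lagrange.sum_pow_div_prod_sub_eq_zero {F ι : Type*} [Field F] [DecidableEq ι]
    {s : Finset ι} {v : ι → F} (hvs : Set.InjOn v s) {α : ℕ} (hα : α + 1 < #s) :
    ∑ i ∈ s, v i ^ α / ∏ j ∈ s.erase i, (v i - v j) = 0 := by
  have hdeg : (X ^ α : F[X]).degree < #s := by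
    rw [degree_X_pow]
    exact_mod_cast (Nat.lt_succ_self α).trans hα
  simpa [coeff_X_pow, show #s - 1 ≠ α by omega] using (Lagrange.coeff_eq_sum hvs hdeg).symm

def upperToeplitz {R : Type*} [Zero R] (d : ℕ) (c : ℕ → R) : Matrix (Fin d) (Fin d) R :=
  fun r s => if (r : ℕ) ≤ s then c (s - r) else 0

theorem jordanBlock_mul_upperToeplitz {d : ℕ} {lam : ℂ} {c c' : ℕ → ℂ}
    (h0 : c' 0 = lam * c 0) (hsucc : ∀ k, c' (k + 1) = c k + lam * c (k + 1)) :
    jordanBlock d lam * upperToeplitz d c = upperToeplitz d c' := by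
  ext r s
  set J : ℕ → ℂ := fun t => if (r : ℕ) = t then lam else if t = r + 1 then 1 else 0
  set T : ℕ → ℂ := fun t => if t ≤ s then c (s - t) else 0
  have hJT : ∀ t, J t * T t =
      (if t = r then lam * T t else 0) + (if t = r + 1 then T t else 0) := by
    intro t
    by_cases ht : t = r <;> by_cases ht' : t = r + 1 <;> simp [J, ht, ht', eq_comm]
  calc (jordanBlock d lam * upperToeplitz d c) r s = ∑ t ∈ range d, J t * T t := by
        rw [mul_apply, ← Fin.sum_univ_eq_sum_range]; rfl
    _ = lam * T r + if r + 1 < d then T (r + 1) else 0 := by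
        rw [sum_congr rfl fun t _ => hJT t, sum_add_distrib, sum_ite_eq', sum_ite_eq']
        simp [r.isLt]
    _ = upperToeplitz d c' r s := by
        rcases lt_trichotomy (r : ℕ) s with hrs | hrs | hrs
        · simp only [T, upperToeplitz, if_pos hrs.le, if_pos (by omega : r.val + 1 < d),
            if_pos (by omega : r.val + 1 ≤ s), show (s : ℕ) - r = (s - (r + 1)) + 1 by omega,
            hsucc]
          ring
        · simp [T, upperToeplitz, hrs, h0]
        · have hsr : ¬ (r : ℕ) ≤ s := by omega
          simp [T, upperToeplitz, hsr, show ¬ (r : ℕ) + 1 ≤ s by omega]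

section PhiRI

variable {N : ℕ} {z : Fin N → ℂ}

theorem PhiRI_eq_upperToeplitz (α d : ℕ) (lam : ℂ) :
    PhiRI N z α d lam = upperToeplitz d (fun k => phiRI N z α (k + 1) lam) :=
  rfl

theorem phiRI_zero_right (hz : Function.Injective z) {α : ℕ} (hα : α + 1 < N) (lam : ℂ) :
    phiRI N z α 0 lam = 0 := by
  have := Lagrange.sum_pow_div_prod_sub_eq_zero (s := univ) hz.injOn (by simpa using hα)
  simpa [phiRI, div_eq_inv_mul] using this

theorem phiRI_succ_succ {lam : ℂ} (hlam : ∀ i, lam ≠ z i) (α j : ℕ) :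
    phiRI N z (α + 1) (j + 1) lam = phiRI N z α j lam + lam * phiRI N z α (j + 1) lam := by
  simp only [phiRI, mul_sum, ← sum_add_distrib]
  refine sum_congr rfl fun i _ => ?_
  have : z i - lam ≠ 0 := sub_ne_zero.mpr (hlam i).symm
  field_simp
  ring

theorem jordanBlock_mul_PhiRI (hz : Function.Injective z) (d : ℕ) {lam : ℂ}
    (hlam : ∀ i, lam ≠ z i) {α : ℕ} (hα : α + 1 < N) :
    jordanBlock d lam * PhiRI N z α d lam = PhiRI N z (α + 1) d lam := by
  rw [PhiRI_eq_upperToeplitz, PhiRI_eq_upperToeplitz]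
  refine jordanBlock_mul_upperToeplitz ?_ fun k => phiRI_succ_succ hlam α (k + 1)
  rw [phiRI_succ_succ hlam, phiRI_zero_right hz hα, zero_add]

end PhiRI

theorem Phi_jordan_power (N : ℕ) (z : Fin N → ℂ) (hz : Function.Injective z)
    (d : ℕ) (lam : ℂ) (hlam : ∀ i, lam ≠ z i) (α : ℕ) (hαN : α < N) :
    PhiRI N z α d lam = jordanBlock d lam ^ α * PhiRI N z 0 d lam := by
  induction α with
  | zero => rw [pow_zero, one_mul]
  | succ α ih =>
    rw [← jordanBlock_mul_PhiRI hz d hlam hαN, ih (by omega), pow_succ', Matrix.mul_assoc]
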